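/- In the Gaffney–Hauser example f_t(x,y,z) = h(x) + (1+z+t)h(y), if the condition h(y) ∈ (f_t) + m·J_{h(x)} + m·J_{h(y)} + m·(h(y)) holds (where m is the maximal ideal of 𝒪_{2n+1}), then h(y) ∈ J_{h(y)} or h(x) ∈ J_{h(x)}; hence if h ∉ J_h the family {f_t} is not trivial and f_t is not R-equivalent to f_0 for t ≠ 0. -/

import Mathlib

open Filter Topology

noncomputable instance germAlgebra {α : Type*} (l : Filter α) : Algebra ℂ (Germ l ℂ) :=
  Algebra.ofModule
    (fun c x y => by
      induction x using Filter.Germ.inductionOn with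
      | h a =>
        induction y using Filter.Germ.inductionOn with
        | h b =>
          rw [← Filter.Germ.coe_smul, ← Filter.Germ.coe_mul, ← Filter.Germ.coe_mul,
            ← Filter.Germ.coe_smul, smul_mul_assoc])
    (fun c x y => by
      induction x using Filter.Germ.inductionOn with
      | h a =>
        induction y using Filter.Germ.inductionOn with
        | h b =>
          rw [← Filter.Germ.coe_smul, ← Filter.Germ.coe_mul, ← Filter.Germ.coe_mul,
            ← Filter.Germ.coe_smul, mul_smul_comm])

variable (E : Type*) [NormedAddCommGroup E] [NormedSpace ℂ E]

/-- `𝒪ₙ`: the ring of germs at `0` of analytic functions on `E`, realized as a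
subalgebra of the ring of germs at `0` of `ℂ`-valued functions. -/
noncomputable def OGerm : Subalgebra ℂ (Germ (𝓝 (0 : E)) ℂ) where
  carrier := {f | ∃ g : E → ℂ, f = ↑g ∧ AnalyticAt ℂ g 0}
  mul_mem' := by
    rintro _ _ ⟨a, rfl, ha⟩ ⟨b, rfl, hb⟩
    exact ⟨a * b, (Germ.coe_mul _ _).symm, ha.mul hb⟩
  add_mem' := by
    rintro _ _ ⟨a, rfl, ha⟩ ⟨b, rfl, hb⟩
    exact ⟨a + b, (Germ.coe_add _ _).symm, ha.add hb⟩
  algebraMap_mem' := fun c => by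
    refine ⟨fun _ => c, ?_, analyticAt_const⟩
    show (c • (1 : Germ (𝓝 (0:E)) ℂ)) = _
    rw [show (1 : Germ (𝓝 (0:E)) ℂ) = ↑(fun _ : E => (1:ℂ)) from rfl, ← Germ.coe_smul]
    congr 1
    funext x
    simp

/-- The set of elements of `𝒪` whose underlying germ is the germ of `g`. -/
def germSet (g : E → ℂ) : Set (OGerm E) := {a | (a : Germ (𝓝 (0 : E)) ℂ) = ↑g}

/-- The Jacobian ideal `J_f` of a germ `f`, generated by the germs of all (directional)
first-order partial derivatives of `f`. -/
noncomputable def Jideal (f : E → ℂ) : Ideal (OGerm E) :=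
  Ideal.span {a | ∃ v : E, (a : Germ (𝓝 (0 : E)) ℂ) = ↑(fun x => fderiv ℂ f x v)}

/-- The maximal ideal `m` of `𝒪`: germs vanishing at `0`. -/
noncomputable def mIdeal : Ideal (OGerm E) where
  carrier := {a | ∃ g : E → ℂ, (a : Germ (𝓝 (0 : E)) ℂ) = ↑g ∧ AnalyticAt ℂ g 0 ∧ g 0 = 0}
  zero_mem' := ⟨fun _ => 0, by
      rw [ZeroMemClass.coe_zero]; exact Germ.coe_zero.symm,
    analyticAt_const, rfl⟩
  add_mem' := by
    rintro a b ⟨ga, ha, haa, ha0⟩ ⟨gb, hb, hab, hb0⟩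
    exact ⟨ga + gb, by rw [AddMemClass.coe_add, ha, hb, Germ.coe_add],
      haa.add hab, by simp [ha0, hb0]⟩
  smul_mem' := by
    rintro c a ⟨ga, ha, haa, ha0⟩
    obtain ⟨gc, hc, hac⟩ := c.2
    exact ⟨gc * ga, by rw [smul_eq_mul, MulMemClass.coe_mul, ha, hc, Germ.coe_mul],
      hac.mul haa, by simp [ha0]⟩

/-- `R`-equivalence of germs `f, g : (E,0) → ℂ`: `f ∘ φ = g` near `0` for some germ of
biholomorphism `φ` fixing `0`. -/
def REquiv (f g : E → ℂ) : Prop :=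
  ∃ φ ψ : E → E, AnalyticAt ℂ φ 0 ∧ AnalyticAt ℂ ψ 0 ∧ φ 0 = 0 ∧ ψ 0 = 0 ∧
    (∀ᶠ x in 𝓝 (0 : E), ψ (φ x) = x) ∧ (∀ᶠ x in 𝓝 (0 : E), φ (ψ x) = x) ∧
    (fun x => f (φ x)) =ᶠ[𝓝 (0 : E)] g

/-!
Write `e = h(y)` and `f_t = h(x) + (1 + z + t) h(y)`, and suppose `e = A f_t + a + b + c e` with
`a ∈ J_{h(x)}`, `b ∈ J_{h(y)}` and `c ∈ m`. If `dh(0) ≠ 0` then `J_h` is the unit ideal. Otherwise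
restricting to the `x`-axis kills `e` and `b`, giving `A(x,0,0) h ∈ J_h`, and restricting to the
`y`-axis kills `a`, giving `(1 - (1 + t) A(0,y,0) - c(0,y,0)) h ∈ J_h`. According as `A(0) ≠ 0` or
`A(0) = 0`, one of the two coefficients is a unit, so `h ∈ J_h`.
-/

namespace Filter.Germ

variable {α γ R : Type*} [Semiring R] {l : Filter α} {lc : Filter γ}

def compTendstoRingHom (g : γ → α) (hg : Tendsto g lc l) : Germ l R →+* Germ lc R where
  toFun f := f.compTendsto g hg
  map_one' := rfl
  map_mul' f₁ f₂ := inductionOn₂ f₁ f₂ fun _ _ => rfl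
  map_zero' := rfl
  map_add' f₁ f₂ := inductionOn₂ f₁ f₂ fun _ _ => rfl

end Filter.Germ

theorem Ideal.exists_mul_add_add_add_eq {R : Type*} [CommRing R] {e f : R} {I J m : Ideal R}
    (he : e ∈ Ideal.span {f} ⊔ I ⊔ J ⊔ m * Ideal.span {e}) :
    ∃ A a b c, a ∈ I ∧ b ∈ J ∧ c ∈ m ∧ A * f + a + b + c * e = e := by
  obtain ⟨_, h123, _, h4, hsum⟩ := Submodule.mem_sup.mp he
  obtain ⟨_, h12, b, hb, rfl⟩ := Submodule.mem_sup.mp h123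
  obtain ⟨_, h1, a, ha, rfl⟩ := Submodule.mem_sup.mp h12
  obtain ⟨A, rfl⟩ := Ideal.mem_span_singleton'.mp h1
  obtain ⟨c, hc, rfl⟩ := Ideal.mem_mul_span_singleton.mp h4
  exact ⟨A, a, b, c, ha, hb, hc, hsum⟩

section fderiv

variable {𝕜 X Y G : Type*} [NontriviallyNormedField 𝕜] [NormedAddCommGroup X] [NormedSpace 𝕜 X]
  [NormedAddCommGroup Y] [NormedSpace 𝕜 Y] [NormedAddCommGroup G] [NormedSpace 𝕜 G]

theorem ContinuousLinearMap.tendsto_nhds_zero (σ : X →L[𝕜] Y) : Tendsto σ (𝓝 0) (𝓝 0) :=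
  σ.continuous.tendsto' 0 0 (map_zero σ)

theorem fderiv_comp_continuousLinearMap {h : Y → G} (π : X →L[𝕜] Y) {x : X}
    (hh : DifferentiableAt 𝕜 h (π x)) :
    fderiv 𝕜 (fun p => h (π p)) x = (fderiv 𝕜 h (π x)).comp π := by
  have h := fderiv_comp x hh π.differentiableAt
  rwa [π.fderiv] at h

theorem AnalyticAt.fderiv_comp_continuousLinearMap_eventuallyEq [CompleteSpace G] {h : Y → G}
    (hh : AnalyticAt 𝕜 h 0) (π : X →L[𝕜] Y) (v : X) :
    (fun x => fderiv 𝕜 (fun p => h (π p)) x v) =ᶠ[𝓝 0] fun x => fderiv 𝕜 h (π x) (π v) := by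
  filter_upwards [π.tendsto_nhds_zero.eventually hh.eventually_analyticAt] with x hx
  rw [fderiv_comp_continuousLinearMap π hx.differentiableAt]
  rfl

end fderiv

def gaffneyHauser {X : Type*} (h : X → ℂ) (t : ℂ) (p : X × X × ℂ) : ℂ :=
  h p.1 + (1 + p.2.2 + t) * h p.2.1

section GaffneyHauser

open ContinuousLinearMap

variable {X : Type*} [NormedAddCommGroup X] [NormedSpace ℂ X] {h : X → ℂ}

theorem AnalyticAt.comp_fst_zero (hh : AnalyticAt ℂ h 0) :
    AnalyticAt ℂ (fun p : X × X × ℂ => h p.1) 0 :=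
  hh.comp_of_eq ((fst ℂ X (X × ℂ)).analyticAt 0) rfl

theorem AnalyticAt.comp_snd_fst_zero (hh : AnalyticAt ℂ h 0) :
    AnalyticAt ℂ (fun p : X × X × ℂ => h p.2.1) 0 :=
  hh.comp_of_eq (((fst ℂ X ℂ).comp (snd ℂ X (X × ℂ))).analyticAt 0) rfl

theorem AnalyticAt.gaffneyHauser (hh : AnalyticAt ℂ h 0) (t : ℂ) :
    AnalyticAt ℂ (gaffneyHauser h t) 0 :=
  hh.comp_fst_zero.add (((analyticAt_const.add
    (((snd ℂ X ℂ).comp (snd ℂ X (X × ℂ))).analyticAt 0)).add analyticAt_const).mul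
      hh.comp_snd_fst_zero)

end GaffneyHauser

namespace OGerm

variable {X Y G : Type*} [NormedAddCommGroup X] [NormedSpace ℂ X]
  [NormedAddCommGroup Y] [NormedSpace ℂ Y] [NormedAddCommGroup G] [NormedSpace ℂ G]

def mk (g : X → ℂ) (hg : AnalyticAt ℂ g 0) : OGerm X := ⟨g, g, rfl, hg⟩

theorem span_germSet_eq_span_singleton {g : X → ℂ} (hg : AnalyticAt ℂ g 0) :
    Ideal.span (germSet X g) = Ideal.span {mk g hg} := by
  congr
  ext a
  exact ⟨fun ha => Subtype.ext ha, fun ha => ha ▸ rfl⟩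

theorem span_germSet_le_iff {g : X → ℂ} (hg : AnalyticAt ℂ g 0) {I : Ideal (OGerm X)} :
    Ideal.span (germSet X g) ≤ I ↔ mk g hg ∈ I := by
  rw [span_germSet_eq_span_singleton hg, Ideal.span_singleton_le_iff_mem]

noncomputable def eval : OGerm X →+* ℂ := Germ.valueRingHom.comp (OGerm X).val.toRingHom

@[simp] theorem eval_mk (g : X → ℂ) (hg : AnalyticAt ℂ g 0) : eval (mk g hg) = g 0 := rfl

theorem isUnit_of_eval_ne_zero {a : OGerm X} (ha : eval a ≠ 0) : IsUnit a := by
  obtain ⟨_, g, rfl, hg⟩ := a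
  refine .of_mul_eq_one (mk (fun x => (g x)⁻¹) (hg.inv ha)) (Subtype.ext ?_)
  exact Germ.coe_eq.mpr ((hg.continuousAt.eventually_ne ha).mono fun x hx => mul_inv_cancel₀ hx)

theorem eval_eq_zero_of_mem_mIdeal {a : OGerm X} (ha : a ∈ mIdeal X) : eval a = 0 := by
  obtain ⟨g, hg, -, hg0⟩ := ha
  rw [← hg0]
  exact congrArg Germ.value hg

noncomputable def comap (σ : Y →L[ℂ] X) : OGerm X →+* OGerm Y :=
  ((Germ.compTendstoRingHom σ σ.tendsto_nhds_zero).comp (OGerm X).val.toRingHom).codRestrict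
    (OGerm Y) fun ⟨_, g, hga, hg⟩ =>
      ⟨fun y => g (σ y), by subst hga; rfl, hg.comp_of_eq (σ.analyticAt 0) (map_zero σ)⟩

theorem coe_comap (σ : Y →L[ℂ] X) (a : OGerm X) :
    ((comap σ a : OGerm Y) : Germ (𝓝 (0 : Y)) ℂ) =
      (a : Germ (𝓝 (0 : X)) ℂ).compTendsto σ σ.tendsto_nhds_zero :=
  rfl

theorem comap_mk_eq_mk (σ : Y →L[ℂ] X) {g : X → ℂ} (hg : AnalyticAt ℂ g 0) {g' : Y → ℂ}
    (hg' : AnalyticAt ℂ g' 0) (hgg' : ∀ y, g (σ y) = g' y) : comap σ (mk g hg) = mk g' hg' := by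
  obtain rfl : (fun y => g (σ y)) = g' := funext hgg'
  rfl

theorem comap_mk_eq_zero (σ : Y →L[ℂ] X) {g : X → ℂ} (hg : AnalyticAt ℂ g 0)
    (hg0 : ∀ y, g (σ y) = 0) : comap σ (mk g hg) = 0 :=
  comap_mk_eq_mk σ hg analyticAt_const hg0

@[simp] theorem eval_comap (σ : Y →L[ℂ] X) (a : OGerm X) : eval (comap σ a) = eval a := by
  obtain ⟨_, g, rfl, hg⟩ := a
  exact congrArg g (map_zero σ)

theorem Jideal_eq_top_of_fderiv_ne_zero {h : X → ℂ} (hh : AnalyticAt ℂ h 0)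
    (hd : fderiv ℂ h 0 ≠ 0) : Jideal X h = ⊤ := by
  obtain ⟨v, hv⟩ : ∃ v, fderiv ℂ h 0 v ≠ 0 := by
    by_contra! hcon
    exact hd (ContinuousLinearMap.ext hcon)
  have hJ : mk (fun x => fderiv ℂ h x v)
      (((ContinuousLinearMap.apply ℂ ℂ v).analyticAt _).comp hh.fderiv) ∈ Jideal X h :=
    Ideal.subset_span ⟨v, rfl⟩
  exact Ideal.eq_top_of_isUnit_mem _ hJ (isUnit_of_eval_ne_zero hv)

theorem comap_mem_Jideal (σ : Y →L[ℂ] X) (π : X →L[ℂ] G) (π' : Y →L[ℂ] G)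
    {h : G → ℂ} (hh : AnalyticAt ℂ h 0) (hcomp : ∀ y, π (σ y) = π' y)
    (hrange : ∀ v, ∃ w, π' w = π v) {a : OGerm X} (ha : a ∈ Jideal X fun p => h (π p)) :
    comap σ a ∈ Jideal Y fun q => h (π' q) := by
  suffices Ideal.map (comap σ) (Jideal X fun p => h (π p)) ≤ Jideal Y fun q => h (π' q) from
    this (Ideal.mem_map_of_mem _ ha)
  rw [Jideal, Ideal.map_span, Ideal.span_le]
  rintro _ ⟨a, ⟨v, hav⟩, rfl⟩
  obtain ⟨w, hw⟩ := hrange v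
  refine Ideal.subset_span ⟨w, ?_⟩
  rw [coe_comap, hav, Germ.coe_compTendsto]
  refine Germ.coe_eq.mpr (((hh.fderiv_comp_continuousLinearMap_eventuallyEq π v).comp_tendsto
    σ.tendsto_nhds_zero).trans ?_)
  refine .trans (.of_forall fun q => ?_) (hh.fderiv_comp_continuousLinearMap_eventuallyEq π' w).symm
  simp only [Function.comp_apply, hcomp, hw]

theorem comap_eq_zero_of_mem_Jideal (σ : Y →L[ℂ] X) (π : X →L[ℂ] G)
    {h : G → ℂ} (hh : AnalyticAt ℂ h 0) (hcomp : ∀ y, π (σ y) = 0) (hd : fderiv ℂ h 0 = 0)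
    {a : OGerm X} (ha : a ∈ Jideal X fun p => h (π p)) : comap σ a = 0 := by
  suffices Ideal.map (comap σ) (Jideal X fun p => h (π p)) = ⊥ by
    simpa [this] using Ideal.mem_map_of_mem (comap σ) ha
  rw [eq_bot_iff, Jideal, Ideal.map_span, Ideal.span_le]
  rintro _ ⟨a, ⟨v, hav⟩, rfl⟩
  refine (Submodule.mem_bot _).mpr (Subtype.ext ?_)
  rw [coe_comap, hav, Germ.coe_compTendsto]
  refine Germ.coe_eq.mpr (((hh.fderiv_comp_continuousLinearMap_eventuallyEq π v).comp_tendsto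
    σ.tendsto_nhds_zero).trans (.of_forall fun q => ?_))
  simp [hcomp, hd]

section GaffneyHauser

open ContinuousLinearMap

variable {h : X → ℂ}

theorem comap_inl_mul_mem_Jideal (hh : AnalyticAt ℂ h 0) (hh0 : h 0 = 0) (hd : fderiv ℂ h 0 = 0)
    {t : ℂ} {A a₂ a₃ c : OGerm (X × X × ℂ)} (ha₂ : a₂ ∈ Jideal _ fun p : X × X × ℂ => h p.1)
    (ha₃ : a₃ ∈ Jideal _ fun p : X × X × ℂ => h p.2.1)
    (hsum : A * mk _ (hh.gaffneyHauser t) + a₂ + a₃ + c * mk _ hh.comp_snd_fst_zero =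
      mk _ hh.comp_snd_fst_zero) :
    comap (inl ℂ X (X × ℂ)) A * mk h hh ∈ Jideal X h := by
  have ha₂' : comap (inl ℂ X (X × ℂ)) a₂ ∈ Jideal X h :=
    comap_mem_Jideal _ (fst ℂ X (X × ℂ)) (.id ℂ X) hh (fun _ => rfl) (fun v => ⟨v.1, rfl⟩) ha₂
  have ha₃' : comap (inl ℂ X (X × ℂ)) a₃ = 0 :=
    comap_eq_zero_of_mem_Jideal _ ((fst ℂ X ℂ).comp (snd ℂ X (X × ℂ))) hh (fun _ => rfl) hd ha₃
  have hsum' := congrArg (comap (inl ℂ X (X × ℂ))) hsum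
  rw [map_add, map_add, map_add, map_mul, map_mul, ha₃',
    comap_mk_eq_zero _ hh.comp_snd_fst_zero fun _ => hh0,
    comap_mk_eq_mk _ (hh.gaffneyHauser t) hh fun y => by simp [gaffneyHauser, hh0]] at hsum'
  rw [show comap _ A * mk h hh = -comap _ a₂ by linear_combination hsum']
  exact neg_mem ha₂'

theorem comap_inr_comp_inl_mul_mem_Jideal (hh : AnalyticAt ℂ h 0) (hh0 : h 0 = 0)
    (hd : fderiv ℂ h 0 = 0) {t : ℂ} {A a₂ a₃ c : OGerm (X × X × ℂ)}
    (ha₂ : a₂ ∈ Jideal _ fun p : X × X × ℂ => h p.1)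
    (ha₃ : a₃ ∈ Jideal _ fun p : X × X × ℂ => h p.2.1)
    (hsum : A * mk _ (hh.gaffneyHauser t) + a₂ + a₃ + c * mk _ hh.comp_snd_fst_zero =
      mk _ hh.comp_snd_fst_zero) :
    (1 - comap ((inr ℂ X (X × ℂ)).comp (inl ℂ X ℂ)) A * mk (fun _ => 1 + t) analyticAt_const -
      comap ((inr ℂ X (X × ℂ)).comp (inl ℂ X ℂ)) c) * mk h hh ∈ Jideal X h := by
  have ha₂' : comap ((inr ℂ X (X × ℂ)).comp (inl ℂ X ℂ)) a₂ = 0 :=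
    comap_eq_zero_of_mem_Jideal _ (fst ℂ X (X × ℂ)) hh (fun _ => rfl) hd ha₂
  have ha₃' : comap ((inr ℂ X (X × ℂ)).comp (inl ℂ X ℂ)) a₃ ∈ Jideal X h :=
    comap_mem_Jideal _ ((fst ℂ X ℂ).comp (snd ℂ X (X × ℂ))) (.id ℂ X) hh (fun _ => rfl)
      (fun v => ⟨v.2.1, rfl⟩) ha₃
  have hf : comap ((inr ℂ X (X × ℂ)).comp (inl ℂ X ℂ)) (mk _ (hh.gaffneyHauser t)) =
      mk (fun _ => 1 + t) analyticAt_const * mk h hh :=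
    comap_mk_eq_mk _ _ (g' := fun y => (1 + t) * h y) (analyticAt_const.mul hh) fun y => by
      simp [gaffneyHauser, hh0]
  have hsum' := congrArg (comap ((inr ℂ X (X × ℂ)).comp (inl ℂ X ℂ))) hsum
  rw [map_add, map_add, map_add, map_mul, map_mul, ha₂', hf,
    comap_mk_eq_mk _ hh.comp_snd_fst_zero hh fun _ => rfl] at hsum'
  rw [show _ * mk h hh = comap _ a₃ by linear_combination -hsum']
  exact ha₃'

theorem mem_Jideal_of_le_gaffneyHauser (hh : AnalyticAt ℂ h 0) (hh0 : h 0 = 0) (t : ℂ)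
    (hmem : Ideal.span (germSet _ fun p : X × X × ℂ => h p.2.1) ≤
      Ideal.span (germSet _ (gaffneyHauser h t)) ⊔
      Jideal _ (fun p : X × X × ℂ => h p.1) ⊔ Jideal _ (fun p : X × X × ℂ => h p.2.1) ⊔
      mIdeal _ * Ideal.span (germSet _ fun p : X × X × ℂ => h p.2.1)) :
    mk h hh ∈ Jideal X h := by
  by_cases hd : fderiv ℂ h 0 = 0
  swap
  · rw [Jideal_eq_top_of_fderiv_ne_zero hh hd]; trivial
  rw [span_germSet_le_iff hh.comp_snd_fst_zero,
    span_germSet_eq_span_singleton (hh.gaffneyHauser t),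
    span_germSet_eq_span_singleton hh.comp_snd_fst_zero] at hmem
  obtain ⟨A, a₂, a₃, c, ha₂, ha₃, hc, hsum⟩ := Ideal.exists_mul_add_add_add_eq hmem
  by_cases hA : eval A = 0
  · refine (Ideal.unit_mul_mem_iff_mem _ (isUnit_of_eval_ne_zero ?_)).mp
      (comap_inr_comp_inl_mul_mem_Jideal hh hh0 hd ha₂ ha₃ hsum)
    simp [hA, eval_eq_zero_of_mem_mIdeal hc]
  · exact (Ideal.unit_mul_mem_iff_mem _ (isUnit_of_eval_ne_zero (by simpa using hA))).mp
      (comap_inl_mul_mem_Jideal hh hh0 hd ha₂ ha₃ hsum)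

theorem mk_comp_snd_fst_mem_Jideal (hh : AnalyticAt ℂ h 0) (hJ : mk h hh ∈ Jideal X h) :
    mk _ hh.comp_snd_fst_zero ∈ Jideal (X × X × ℂ) fun p => h p.2.1 :=
  comap_mem_Jideal ((fst ℂ X ℂ).comp (snd ℂ X (X × ℂ))) (.id ℂ X)
    ((fst ℂ X ℂ).comp (snd ℂ X (X × ℂ))) hh (fun _ => rfl) (fun v => ⟨(0, v, 0), rfl⟩) hJ

end GaffneyHauser

end OGerm

/-- **Gaffney–Hauser example, conclusion.**  For `f_t(x,y,z) = h(x) + (1+z+t)h(y)`: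
if `h(y) ∈ (f_t) + m·J_{h(x)} + m·J_{h(y)} + m·(h(y))` then `h(y) ∈ J_{h(y)}` or
`h(x) ∈ J_{h(x)}`; hence, if `h ∉ J_h` (so neither of these holds) and triviality
of the family would force this membership (the Gaffney–Hauser criterion), the family
`{f_t}` is not trivial: `f_t` is not `R`-equivalent to `f_0` for `t ≠ 0`. -/
theorem stmt_13 {n : ℕ} (h : (Fin n → ℂ) → ℂ)
    (hh : AnalyticAt ℂ h 0) (hh0 : h 0 = 0)
    (F : ℂ → ((Fin n → ℂ) × (Fin n → ℂ) × ℂ) → ℂ)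
    (hF : ∀ t p, F t p = h p.1 + (1 + p.2.2 + t) * h p.2.1)
    (Mem : ℂ → Prop)
    (hMem : ∀ t, Mem t ↔
      Ideal.span (germSet _ (fun p : (Fin n → ℂ) × (Fin n → ℂ) × ℂ => h p.2.1)) ≤
        Ideal.span (germSet _ (F t)) ⊔
        mIdeal _ * Jideal _ (fun p : (Fin n → ℂ) × (Fin n → ℂ) × ℂ => h p.1) ⊔
        mIdeal _ * Jideal _ (fun p : (Fin n → ℂ) × (Fin n → ℂ) × ℂ => h p.2.1) ⊔
        mIdeal _ * Ideal.span (germSet _ (fun p : (Fin n → ℂ) × (Fin n → ℂ) × ℂ => h p.2.1))) :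
    (∀ t : ℂ, Mem t →
      Ideal.span (germSet _ (fun p : (Fin n → ℂ) × (Fin n → ℂ) × ℂ => h p.2.1)) ≤
          Jideal _ (fun p : (Fin n → ℂ) × (Fin n → ℂ) × ℂ => h p.2.1) ∨
      Ideal.span (germSet _ (fun p : (Fin n → ℂ) × (Fin n → ℂ) × ℂ => h p.1)) ≤
          Jideal _ (fun p : (Fin n → ℂ) × (Fin n → ℂ) × ℂ => h p.1)) ∧
    ((¬ Ideal.span (germSet (Fin n → ℂ) h) ≤ Jideal (Fin n → ℂ) h) →
      (∀ t : ℂ, t ≠ 0 → REquiv _ (F t) (F 0) → Mem t) →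
      ∀ t : ℂ, t ≠ 0 → ¬ REquiv _ (F t) (F 0)) := by
  have key : ∀ t, Mem t → OGerm.mk h hh ∈ Jideal _ h := fun t ht => by
    rw [hMem, show F t = gaffneyHauser h t from funext (hF t)] at ht
    refine OGerm.mem_Jideal_of_le_gaffneyHauser hh hh0 t (ht.trans ?_)
    gcongr <;> exact Ideal.mul_le_right
  refine ⟨fun t ht => Or.inl ?_, fun hJ hcrit t ht hR => hJ ?_⟩
  · exact (OGerm.span_germSet_le_iff _).mpr (OGerm.mk_comp_snd_fst_mem_Jideal hh (key t ht))
  · exact (OGerm.span_germSet_le_iff hh).mpr (key t (hcrit t ht hR))
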